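/- arXiv:2206.11483 — 5 statements merged into one kernel-verified Lean document; each statement's English description precedes it below -/
import Mathlib

section
/- Let R *_τ^σ G be a crossed product of a finite group G over a simple ring R with action σ and twisting τ. If for every nontrivial g ∈ G the automorphism σ_g of R is not inner, then R *_τ^σ G is a simple ring and its center equals Z(R)^G, the fixed subring of the center of R under the action of G. -/
/-!
Take a nonzero element of an ideal `I` of minimal support and shift it by a basis unit so that its
coefficient at `1` is nonzero. The coefficients at `1` of the elements of `I` supported in that
support form a two-sided ideal of `R`, hence all of `R`; so `I` contains an element `d` of minimal
support with `d 1 = τ(1,1)⁻¹`. For `r ∈ R` the commutator `ι r * d - d * ι r` lies in `I` and has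
strictly smaller support, so it vanishes: every coefficient satisfies `σ_g(r) d_g = d_g r`. In a
simple ring such a nonzero `d_g` is a unit implementing `σ_g` as an inner automorphism, so `d_g = 0`
for `g ≠ 1`, and `d = 1 ∈ I`. The same argument applied to a central element shows that it lies in
`ι R`.
-/

open Function

def RingEquiv.IsInner {R : Type*} [Ring R] (φ : R ≃+* R) : Prop :=
  ∃ u : Rˣ, ∀ r : R, φ r = (u⁻¹ : Rˣ) * r * u

section SimpleRing

variable {R : Type*} [Ring R] [IsSimpleRing R]

theorem IsSimpleRing.exists_mul_eq_one_of_forall_exists_mul_eq {c : R} (hc0 : c ≠ 0)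
    (hc : ∀ r, ∃ s, r * c = c * s) : ∃ d, c * d = 1 := by
  let J : TwoSidedIdeal R := .mk' {x | ∃ d, x = c * d} ⟨0, (mul_zero c).symm⟩
    (fun ⟨d₁, h₁⟩ ⟨d₂, h₂⟩ => ⟨d₁ + d₂, by rw [h₁, h₂, mul_add]⟩)
    (fun ⟨d, h⟩ => ⟨-d, by rw [h, mul_neg]⟩)
    (fun {x _} ⟨d, h⟩ => by
      obtain ⟨s, hs⟩ := hc x
      exact ⟨s * d, by rw [h, ← mul_assoc, hs, mul_assoc]⟩)
    (fun {_ y} ⟨d, h⟩ => ⟨d * y, by rw [h, mul_assoc]⟩)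
  have hcJ : c ∈ J := (TwoSidedIdeal.mem_mk' ..).2 ⟨1, (mul_one c).symm⟩
  obtain ⟨d, hd⟩ := (TwoSidedIdeal.mem_mk' ..).1 (IsSimpleRing.one_mem_of_ne_zero_mem J hc0 hcJ)
  exact ⟨d, hd.symm⟩

theorem IsSimpleRing.isUnit_of_forall_map_mul_eq_mul (φ : R ≃+* R) {c : R} (hc0 : c ≠ 0)
    (hc : ∀ r, φ r * c = c * r) : IsUnit c := by
  obtain ⟨d, hd⟩ := exists_mul_eq_one_of_forall_exists_mul_eq hc0 fun r =>
    ⟨φ.symm r, by rw [← hc, φ.apply_symm_apply]⟩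
  obtain ⟨e, he⟩ := exists_mul_eq_one_of_forall_exists_mul_eq (c := MulOpposite.op c)
    (MulOpposite.op_ne_zero_iff c |>.2 hc0) fun r =>
      ⟨MulOpposite.op (φ r.unop), MulOpposite.unop_injective <| by
        simp only [MulOpposite.unop_mul, MulOpposite.unop_op, hc]⟩
  have he' : e.unop * c = 1 := congrArg MulOpposite.unop he
  exact isUnit_iff_exists.2 ⟨d, hd, by rwa [← left_inv_eq_right_inv he' hd]⟩

theorem RingEquiv.eq_zero_of_forall_map_mul_eq_mul {φ : R ≃+* R} (hφ : ¬ φ.IsInner) {c : R}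
    (hc : ∀ r, φ r * c = c * r) : c = 0 := by
  by_contra hc0
  obtain ⟨u, rfl⟩ := IsSimpleRing.isUnit_of_forall_map_mul_eq_mul φ hc0 hc
  exact hφ ⟨u⁻¹, fun r => by rw [inv_inv, ← hc, mul_assoc, u.mul_inv, mul_one]⟩

end SimpleRing

section CrossedProduct

variable {R A G : Type*} [Ring R] [Ring A] [Fintype G]

def crossedSum (ι : R →+* A) (z : G → Aˣ) : (G → R) →+ A where
  toFun c := ∑ g, (z g : A) * ι (c g)
  map_zero' := by simp
  map_add' c d := by simp only [Pi.add_apply, map_add, mul_add, Finset.sum_add_distrib]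

theorem crossedSum_apply (ι : R →+* A) (z : G → Aˣ) (c : G → R) :
    crossedSum ι z c = ∑ g, (z g : A) * ι (c g) := rfl

theorem crossedSum_mul_ι (ι : R →+* A) (z : G → Aˣ) (c : G → R) (r : R) :
    crossedSum ι z c * ι r = crossedSum ι z fun g => c g * r := by
  simp only [crossedSum_apply, Finset.sum_mul, map_mul, mul_assoc]

variable [Group G]

structure IsCrossedProduct (ι : R →+* A) (σ : G → R ≃+* R) (τ : G → G → Rˣ) (z : G → Aˣ) :
    Prop where
  z_mul_z : ∀ g h, (z g : A) * z h = z (g * h) * ι (τ g h)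
  ι_mul_z : ∀ r g, ι r * z g = z g * ι (σ g r)
  exists_eq_crossedSum : ∀ a, ∃ c, a = crossedSum ι z c
  crossedSum_eq_zero : ∀ c, crossedSum ι z c = 0 → c = 0

namespace IsCrossedProduct

variable {ι : R →+* A} {σ : G → R ≃+* R} {τ : G → G → Rˣ} {z : G → Aˣ}

theorem z_one (hA : IsCrossedProduct ι σ τ z) : (z 1 : A) = ι (τ 1 1) :=
  (z 1).mul_right_inj.1 <| by rw [hA.z_mul_z, mul_one]

theorem crossedSum_eq_ι_of_forall_ne_one (hA : IsCrossedProduct ι σ τ z) {c : G → R}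
    (hc : ∀ g ≠ 1, c g = 0) : crossedSum ι z c = ι (τ 1 1 * c 1) := by
  rw [crossedSum_apply, Finset.sum_eq_single 1 (fun g _ hg => by rw [hc g hg, map_zero, mul_zero])
    (by simp), hA.z_one, map_mul]

theorem ι_injective (hA : IsCrossedProduct ι σ τ z) : Injective ι := by
  classical
  refine (injective_iff_map_eq_zero ι).2 fun r hr => ?_
  have h := hA.crossedSum_eq_zero (Pi.single 1 r) <| by
    rw [hA.crossedSum_eq_ι_of_forall_ne_one fun g hg => by simp [hg], map_mul,
      Pi.single_eq_same, hr, mul_zero]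
  simpa using congrFun h 1

theorem σ_one_apply (hA : IsCrossedProduct ι σ τ z) (r : R) :
    σ 1 r = (↑(τ 1 1)⁻¹ : R) * r * τ 1 1 := by
  have h := hA.ι_mul_z r 1
  rw [hA.z_one, ← map_mul, ← map_mul] at h
  rw [mul_assoc, hA.ι_injective h, ← mul_assoc, Units.inv_mul, one_mul]

theorem ι_mul_crossedSum (hA : IsCrossedProduct ι σ τ z) (r : R) (c : G → R) :
    ι r * crossedSum ι z c = crossedSum ι z fun g => σ g r * c g := by
  simp only [crossedSum_apply, Finset.mul_sum, ← mul_assoc, hA.ι_mul_z, map_mul]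

theorem ι_mul_crossedSum_sub_crossedSum_mul_ι (hA : IsCrossedProduct ι σ τ z) (r : R)
    (c : G → R) :
    ι r * crossedSum ι z c - crossedSum ι z c * ι r =
      crossedSum ι z fun g => σ g r * c g - c g * r := by
  rw [hA.ι_mul_crossedSum, crossedSum_mul_ι, ← map_sub]
  rfl

theorem z_inv_mul_crossedSum (hA : IsCrossedProduct ι σ τ z) (g : G) (c : G → R) :
    z g⁻¹ * crossedSum ι z c = crossedSum ι z fun h => τ g⁻¹ (g * h) * c (g * h) := by
  rw [crossedSum_apply, crossedSum_apply, Finset.mul_sum]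
  refine (Fintype.sum_equiv (Equiv.mulLeft g) _ _ fun h => ?_).symm
  rw [Equiv.coe_mulLeft, ← mul_assoc, hA.z_mul_z, inv_mul_cancel_left, mul_assoc, ← map_mul]

theorem crossedSum_eq_ι_of_forall_map_mul_eq_mul (hA : IsCrossedProduct ι σ τ z)
    [IsSimpleRing R] (hσ : ∀ g ≠ 1, ¬ (σ g).IsInner) {c : G → R}
    (hc : ∀ r g, σ g r * c g = c g * r) : crossedSum ι z c = ι (τ 1 1 * c 1) :=
  hA.crossedSum_eq_ι_of_forall_ne_one fun g hg =>
    (σ g).eq_zero_of_forall_map_mul_eq_mul (hσ g hg) fun r => hc r g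

def coeffOneIdeal (hA : IsCrossedProduct ι σ τ z) (I : TwoSidedIdeal A) (s : Set G) :
    TwoSidedIdeal R :=
  .mk' {x | ∃ d, crossedSum ι z d ∈ I ∧ support d ⊆ s ∧ d 1 = x}
    ⟨0, by rw [map_zero]; exact I.zero_mem, by simp, rfl⟩
    (fun ⟨d₁, h₁I, h₁s, h₁⟩ ⟨d₂, h₂I, h₂s, h₂⟩ =>
      ⟨d₁ + d₂, by rw [map_add]; exact I.add_mem h₁I h₂I,
        (support_add _ _).trans (Set.union_subset h₁s h₂s), by rw [Pi.add_apply, h₁, h₂]⟩)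
    (fun ⟨d, hI, hs, h⟩ =>
      ⟨-d, by rw [map_neg]; exact I.neg_mem hI, by rwa [support_neg], by rw [Pi.neg_apply, h]⟩)
    (fun {x _} ⟨d, hI, hs, h⟩ =>
      ⟨fun g => σ g ((σ 1).symm x) * d g,
        by rw [← hA.ι_mul_crossedSum]; exact I.mul_mem_left _ _ hI,
        fun _ hg => hs (right_ne_zero_of_mul hg), by simp only [RingEquiv.apply_symm_apply, h]⟩)
    (fun {_ y} ⟨d, hI, hs, h⟩ =>
      ⟨fun g => d g * y, by rw [← crossedSum_mul_ι]; exact I.mul_mem_right _ _ hI,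
        fun _ hg => hs (left_ne_zero_of_mul hg), by simp only [h]⟩)

theorem mem_coeffOneIdeal (hA : IsCrossedProduct ι σ τ z) {I : TwoSidedIdeal A} {s : Set G}
    {x : R} :
    x ∈ hA.coeffOneIdeal I s ↔ ∃ d, crossedSum ι z d ∈ I ∧ support d ⊆ s ∧ d 1 = x :=
  TwoSidedIdeal.mem_mk' ..

theorem exists_minimal_support (hA : IsCrossedProduct ι σ τ z) [IsSimpleRing R]
    {I : TwoSidedIdeal A} (hI : I ≠ ⊥) :
    ∃ d, crossedSum ι z d ∈ I ∧ d 1 = ↑(τ 1 1)⁻¹ ∧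
      ∀ e, crossedSum ι z e ∈ I → e ≠ 0 → (support d).ncard ≤ (support e).ncard := by
  obtain ⟨a, haI, ha0⟩ : ∃ a ∈ I, a ≠ 0 := by
    by_contra! h
    exact hI (eq_bot_iff.2 fun a ha => (TwoSidedIdeal.mem_bot _).2 (h a ha))
  obtain ⟨c₀, rfl⟩ := hA.exists_eq_crossedSum a
  obtain ⟨c, ⟨hcI, hc0⟩, hmin⟩ := (measure fun c : G → R => (support c).ncard).wf.has_min
    {c | crossedSum ι z c ∈ I ∧ c ≠ 0} ⟨c₀, haI, fun h => ha0 (by rw [h, map_zero])⟩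
  obtain ⟨g₀, hg₀⟩ := support_nonempty_iff.2 hc0
  set c' : G → R := fun h => τ g₀⁻¹ (g₀ * h) * c (g₀ * h)
  have hc'I : crossedSum ι z c' ∈ I := hA.z_inv_mul_crossedSum g₀ c ▸ I.mul_mem_left _ _ hcI
  have hc'1 : c' 1 ≠ 0 := (τ _ _).mul_right_eq_zero.not.2 (by rwa [mul_one])
  have hcard : (support c').ncard = (support c).ncard := by
    have hsupp : support c' = (g₀ * ·) ⁻¹' support c := by
      ext h
      exact (τ _ _).mul_right_eq_zero.not
    rw [hsupp, Set.ncard_preimage_of_injective_subset_range (mul_right_injective g₀)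
      (by simp [(mul_left_surjective g₀).range_eq])]
  have htop : hA.coeffOneIdeal I (support c') = ⊤ :=
    (TwoSidedIdeal.one_mem_iff _).1 <| IsSimpleRing.one_mem_of_ne_zero_mem _ hc'1 <|
      hA.mem_coeffOneIdeal.2 ⟨c', hc'I, subset_rfl, rfl⟩
  obtain ⟨d, hdI, hds, hd1⟩ := hA.mem_coeffOneIdeal.1 (by rw [htop]; trivial)
  refine ⟨d, hdI, hd1, fun e heI he0 => ?_⟩
  calc (support d).ncard ≤ (support c').ncard := Set.ncard_le_ncard hds
    _ = (support c).ncard := hcard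
    _ ≤ (support e).ncard := not_lt.1 (hmin e ⟨heI, he0⟩)

theorem map_mul_eq_mul_of_minimal_support (hA : IsCrossedProduct ι σ τ z) [Nontrivial R]
    {I : TwoSidedIdeal A} {d : G → R} (hdI : crossedSum ι z d ∈ I) (hd1 : d 1 = ↑(τ 1 1)⁻¹)
    (hmin : ∀ e, crossedSum ι z e ∈ I → e ≠ 0 → (support d).ncard ≤ (support e).ncard)
    (r : R) (g : G) : σ g r * d g = d g * r := by
  set e : G → R := fun g => σ g r * d g - d g * r
  have heI : crossedSum ι z e ∈ I := by
    rw [← hA.ι_mul_crossedSum_sub_crossedSum_mul_ι]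
    exact I.sub_mem (I.mul_mem_left _ _ hdI) (I.mul_mem_right _ _ hdI)
  have he1 : e 1 = 0 := by simp [e, hd1, hA.σ_one_apply, mul_assoc]
  have hsupp : support e ⊂ support d := by
    have hsub : support e ⊆ support d := fun h hh hd => hh (by simp [e, hd])
    exact (Set.ssubset_iff_of_subset hsub).2
      ⟨1, by rw [mem_support, hd1]; exact Units.ne_zero _, fun h => h he1⟩
  have he0 : e = 0 := by
    by_contra he0
    exact (Set.ncard_lt_ncard hsupp).not_ge (hmin e heI he0)
  exact sub_eq_zero.1 (congrFun he0 g)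

theorem isSimpleRing (hA : IsCrossedProduct ι σ τ z) [IsSimpleRing R]
    (hσ : ∀ g ≠ 1, ¬ (σ g).IsInner) : IsSimpleRing A := by
  have : Nontrivial A := hA.ι_injective.nontrivial
  refine .of_eq_bot_or_eq_top fun I => or_iff_not_imp_left.2 fun hI => ?_
  obtain ⟨d, hdI, hd1, hmin⟩ := hA.exists_minimal_support hI
  have hd : crossedSum ι z d = 1 := by
    rw [hA.crossedSum_eq_ι_of_forall_map_mul_eq_mul hσ
      (hA.map_mul_eq_mul_of_minimal_support hdI hd1 hmin), hd1, Units.mul_inv, map_one]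
  exact (TwoSidedIdeal.one_mem_iff _).1 (hd ▸ hdI)

theorem ι_mem_center_iff (hA : IsCrossedProduct ι σ τ z) (r : R) :
    ι r ∈ Subring.center A ↔ r ∈ Subring.center R ∧ ∀ g, σ g r = r := by
  simp only [Subring.mem_center_iff]
  refine ⟨fun h => ⟨fun s => hA.ι_injective ?_, fun g => hA.ι_injective ?_⟩, fun ⟨hc, hσ⟩ a => ?_⟩
  · rw [map_mul, map_mul, h]
  · exact (z g).mul_right_inj.1 (by rw [← hA.ι_mul_z, h (z g)])
  · obtain ⟨c, rfl⟩ := hA.exists_eq_crossedSum a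
    rw [hA.ι_mul_crossedSum, crossedSum_mul_ι]
    simp only [hσ, hc]

theorem exists_eq_ι_of_mem_center (hA : IsCrossedProduct ι σ τ z) [IsSimpleRing R]
    (hσ : ∀ g ≠ 1, ¬ (σ g).IsInner) {a : A} (ha : a ∈ Subring.center A) : ∃ r, a = ι r := by
  obtain ⟨c, rfl⟩ := hA.exists_eq_crossedSum a
  refine ⟨_, hA.crossedSum_eq_ι_of_forall_map_mul_eq_mul hσ fun r g => ?_⟩
  have h := hA.ι_mul_crossedSum_sub_crossedSum_mul_ι r c
  rw [Subring.mem_center_iff.1 ha (ι r), sub_self] at h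
  exact sub_eq_zero.1 (congrFun (hA.crossedSum_eq_zero _ h.symm) g)

end IsCrossedProduct

end CrossedProduct

theorem stmt2_general {R A : Type*} [Ring R] [Ring A] {G : Type*} [Group G] [Fintype G]
    (ι : R →+* A)
    (σ : G → R ≃+* R) (τ : G → G → Rˣ) (z : G → Aˣ)
    (hmul : ∀ g h : G, (z g : A) * z h = (z (g * h) : A) * ι (τ g h))
    (hcomm : ∀ (r : R) (g : G), ι r * z g = (z g : A) * ι (σ g r))
    (hspan : ∀ a : A, ∃ c : G → R, a = ∑ g : G, (z g : A) * ι (c g))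
    (hindep : ∀ c : G → R, ∑ g : G, (z g : A) * ι (c g) = 0 → c = 0)
    (hRsimple : IsSimpleRing R)
    (hnotinner : ∀ g : G, g ≠ 1 → ¬ ∃ u : Rˣ, ∀ r : R, σ g r = (u⁻¹ : Rˣ) * r * u) :
    IsSimpleRing A ∧
      (Subring.center A : Set A) =
        ι '' {r : R | r ∈ Subring.center R ∧ ∀ g : G, σ g r = r} := by
  have hA : IsCrossedProduct ι σ τ z := ⟨hmul, hcomm, hspan, hindep⟩
  refine ⟨hA.isSimpleRing hnotinner, Set.ext fun a => ⟨fun ha => ?_, ?_⟩⟩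
  · obtain ⟨r, rfl⟩ := hA.exists_eq_ι_of_mem_center hnotinner ha
    exact ⟨r, (hA.ι_mem_center_iff r).1 ha, rfl⟩
  · rintro ⟨r, hr, rfl⟩
    exact (hA.ι_mem_center_iff r).2 hr

/-- A crossed product `R *_τ^σ G`: a ring `A` containing `R` via `ι`, with basis units
`z g` (`g ∈ G`) satisfying `z g * z h = z (g h) * τ(g,h)` and `r * z g = z g * σ_g(r)`,
such that `A` is free as a right `R`-module on the `z g`.  If `R` is simple and `σ_g` is
not inner for every `1 ≠ g ∈ G`, then `A` is simple and its center equals `Z(R)^G`. -/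
theorem stmt2 {R A : Type*} [Ring R] [Ring A] {G : Type*} [Group G] [Finite G] [Fintype G]
    (ι : R →+* A) (hι : Function.Injective ι)
    (σ : G → R ≃+* R) (τ : G → G → Rˣ) (z : G → Aˣ)
    (hcocycle : ∀ g h x : G,
      (τ (g * h) x : R) * σ x (τ g h) = (τ g (h * x) : R) * τ h x)
    (hmul : ∀ g h : G, (z g : A) * z h = (z (g * h) : A) * ι (τ g h))
    (hcomm : ∀ (r : R) (g : G), ι r * z g = (z g : A) * ι (σ g r))
    (hspan : ∀ a : A, ∃ c : G → R, a = ∑ g : G, (z g : A) * ι (c g))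
    (hindep : ∀ c : G → R, ∑ g : G, (z g : A) * ι (c g) = 0 → c = 0)
    (hRsimple : IsSimpleRing R)
    (hnotinner : ∀ g : G, g ≠ 1 → ¬ ∃ u : Rˣ, ∀ r : R, σ g r = (u⁻¹ : Rˣ) * r * u) :
    IsSimpleRing A ∧
      (Subring.center A : Set A) =
        ι '' {r : R | r ∈ Subring.center R ∧ ∀ g : G, σ g r = r} :=
  stmt2_general ι σ τ z hmul hcomm hspan hindep hRsimple hnotinner
end

section
/- Let A be a central simple algebra over a field F and B = M_k(F) a central F-subalgebra of A (k×k matrices over F embedded in A). Then A is isomorphic as an F-algebra to M_k(Cen_A(B)), the k×k matrix algebra over the centralizer of B in A. -/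
/-!
The images `e i j` of the matrix units of `M_k(F)` are matrix units of `A` with `∑ i, e i i = 1`.
Each `a : A` is recovered as `∑ i j, a i j * e i j` from the coefficients
`a i j = ∑ l, e l i * a * e j l`, and these coefficients commute with every `e p q`, i.e. lie in
the centralizer of `B`; `a ↦ (a i j)` is then an algebra isomorphism `A ≃ M_k(Cen_A(B))`.
-/

namespace AlgHom

variable {R A n : Type*} [CommSemiring R] [Semiring A] [Algebra R A] [Fintype n] [DecidableEq n]
  (f : Matrix n n R →ₐ[R] A)

def matrixUnit (i j : n) : A := f (Matrix.single i j 1)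

theorem matrixUnit_mul_matrixUnit (i j l m : n) :
    f.matrixUnit i j * f.matrixUnit l m = if j = l then f.matrixUnit i m else 0 := by
  simp only [matrixUnit, ← map_mul]
  split_ifs with h
  · rw [h, Matrix.single_mul_single_same, one_mul]
  · rw [Matrix.single_mul_single_of_ne (h := h), map_zero]

theorem sum_matrixUnit_self : ∑ i, f.matrixUnit i i = 1 := by
  simp only [matrixUnit, ← map_sum, Matrix.sum_single_one, map_one]

theorem apply_eq_sum_smul_matrixUnit (M : Matrix n n R) :
    f M = ∑ i, ∑ j, M i j • f.matrixUnit i j := by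
  conv_lhs => rw [Matrix.matrix_eq_sum_single M]
  simp [matrixUnit, map_sum, ← map_smul, Matrix.smul_single]

theorem mem_centralizer_range_iff {x : A} :
    x ∈ Subalgebra.centralizer R (Set.range f) ↔
      ∀ i j, f.matrixUnit i j * x = x * f.matrixUnit i j := by
  rw [Subalgebra.mem_centralizer_iff]
  refine ⟨fun h i j => h _ ⟨_, rfl⟩, ?_⟩
  rintro h _ ⟨M, rfl⟩
  simp only [apply_eq_sum_smul_matrixUnit, Finset.sum_mul, Finset.mul_sum, smul_mul_assoc,
    mul_smul_comm, h]

def matrixEntry (a : A) (i j : n) : A := ∑ l, f.matrixUnit l i * a * f.matrixUnit j l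

theorem matrixUnit_mul_matrixEntry (a : A) (i j p q : n) :
    f.matrixUnit p q * f.matrixEntry a i j = f.matrixUnit p i * a * f.matrixUnit j q := by
  simp [matrixEntry, Finset.mul_sum, ← mul_assoc, matrixUnit_mul_matrixUnit]

theorem matrixEntry_mul_matrixUnit (a : A) (i j p q : n) :
    f.matrixEntry a i j * f.matrixUnit p q = f.matrixUnit p i * a * f.matrixUnit j q := by
  simp [matrixEntry, Finset.sum_mul, mul_assoc, matrixUnit_mul_matrixUnit]

theorem matrixEntry_mem_centralizer (a : A) (i j : n) :
    f.matrixEntry a i j ∈ Subalgebra.centralizer R (Set.range f) := by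
  simp [mem_centralizer_range_iff, matrixUnit_mul_matrixEntry, matrixEntry_mul_matrixUnit]

theorem matrixEntry_sum {ι : Type*} (s : Finset ι) (x : ι → A) (i j : n) :
    f.matrixEntry (∑ t ∈ s, x t) i j = ∑ t ∈ s, f.matrixEntry (x t) i j := by
  simp only [matrixEntry, Finset.mul_sum, Finset.sum_mul]
  exact Finset.sum_comm

theorem matrixEntry_add (a b : A) (i j : n) :
    f.matrixEntry (a + b) i j = f.matrixEntry a i j + f.matrixEntry b i j := by
  simp only [matrixEntry, mul_add, add_mul, Finset.sum_add_distrib]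

theorem matrixEntry_mul_left {c : A} (hc : c ∈ Subalgebra.centralizer R (Set.range f))
    (a : A) (i j : n) : f.matrixEntry (c * a) i j = c * f.matrixEntry a i j := by
  simp only [matrixEntry, Finset.mul_sum, ← mul_assoc, (f.mem_centralizer_range_iff.1 hc _ _)]

theorem matrixEntry_matrixUnit (p q i j : n) :
    f.matrixEntry (f.matrixUnit p q) i j = Matrix.single p q 1 i j := by
  obtain rfl | hi := eq_or_ne i p
  · obtain rfl | hj := eq_or_ne q j
    · simp [matrixEntry, matrixUnit_mul_matrixUnit, sum_matrixUnit_self]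
    · simp [matrixEntry, matrixUnit_mul_matrixUnit, hj]
  · simp [matrixEntry, matrixUnit_mul_matrixUnit, hi, hi.symm]

theorem matrixEntry_one (i j : n) : f.matrixEntry 1 i j = (1 : Matrix n n A) i j := by
  rw [← f.sum_matrixUnit_self, matrixEntry_sum, ← Matrix.sum_single_one, Matrix.sum_apply]
  simp only [matrixEntry_matrixUnit]

theorem matrixEntry_mul (a b : A) (i j : n) :
    f.matrixEntry (a * b) i j = ∑ l, f.matrixEntry a i l * f.matrixEntry b l j := by
  have h (l : n) : f.matrixEntry a i l * f.matrixEntry b l j =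
      ∑ m, f.matrixUnit m i * a * f.matrixUnit l l * b * f.matrixUnit j m := by
    simp only [matrixEntry.eq_1 f b, Finset.mul_sum, ← mul_assoc, matrixEntry_mul_matrixUnit]
  rw [Finset.sum_congr rfl fun l _ => h l, Finset.sum_comm]
  simp only [← Finset.sum_mul, ← Finset.mul_sum, sum_matrixUnit_self, mul_one]
  simp only [matrixEntry, mul_assoc]

theorem sum_matrixEntry_mul_matrixUnit (a : A) :
    ∑ i, ∑ j, f.matrixEntry a i j * f.matrixUnit i j = a := by
  simp only [matrixEntry_mul_matrixUnit, ← Finset.sum_mul, ← Finset.mul_sum, sum_matrixUnit_self,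
    one_mul, mul_one]

theorem matrixEntry_sum_mul_matrixUnit {c : n → n → A}
    (hc : ∀ p q, c p q ∈ Subalgebra.centralizer R (Set.range f)) (i j : n) :
    f.matrixEntry (∑ p, ∑ q, c p q * f.matrixUnit p q) i j = c i j := by
  simp [matrixEntry_sum, matrixEntry_mul_left f (hc _ _), matrixEntry_matrixUnit,
    Matrix.single_apply, ite_and]

theorem matrixEntry_algebraMap (r : R) (i j : n) :
    f.matrixEntry (algebraMap R A r) i j = if i = j then algebraMap R A r else 0 := by
  rw [← mul_one (algebraMap R A r),
    matrixEntry_mul_left f (Subalgebra.algebraMap_mem _ r), matrixEntry_one, Matrix.one_apply]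
  split_ifs <;> simp

def equivMatrixCentralizer : A ≃ₐ[R] Matrix n n (Subalgebra.centralizer R (Set.range f)) where
  toFun a := Matrix.of fun i j => ⟨f.matrixEntry a i j, f.matrixEntry_mem_centralizer a i j⟩
  invFun M := ∑ i, ∑ j, (M i j : A) * f.matrixUnit i j
  left_inv := f.sum_matrixEntry_mul_matrixUnit
  right_inv M := by
    ext i j
    exact f.matrixEntry_sum_mul_matrixUnit (fun p q => (M p q).2) i j
  map_mul' a b := by
    ext i j
    simp [Matrix.mul_apply, matrixEntry_mul]
  map_add' a b := by
    ext i j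
    simp [matrixEntry_add]
  commutes' r := by
    ext i j
    simp only [Matrix.algebraMap_matrix_apply]
    split_ifs with h <;> simp [matrixEntry_algebraMap, h]

end AlgHom

theorem stmt3_general (F : Type*) [Field F] (A : Type*) [Ring A] [Algebra F A]
    (k : ℕ) (B : Subalgebra F A)
    (hB : Nonempty (B ≃ₐ[F] Matrix (Fin k) (Fin k) F)) :
    Nonempty (A ≃ₐ[F] Matrix (Fin k) (Fin k) (Subalgebra.centralizer F (B : Set A))) := by
  obtain ⟨φ⟩ := hB
  let f : Matrix (Fin k) (Fin k) F →ₐ[F] A := B.val.comp φ.symm.toAlgHom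
  have hf : Set.range f = B := by
    ext x
    simp [f]
  rw [← hf]
  exact ⟨f.equivMatrixCentralizer⟩

/-- If `A` is a finite-dimensional central simple algebra over a field `F` and
`B ≅ M_k(F)` is an `F`-subalgebra of `A`, then `A ≅ M_k(Cen_A(B))`. -/
theorem stmt3 (F : Type*) [Field F] (A : Type*) [Ring A] [Algebra F A]
    [FiniteDimensional F A] [Algebra.IsCentral F A] [IsSimpleRing A]
    (k : ℕ) (hk : 0 < k) (B : Subalgebra F A)
    (hB : Nonempty (B ≃ₐ[F] Matrix (Fin k) (Fin k) F)) :
    Nonempty (A ≃ₐ[F] Matrix (Fin k) (Fin k) (Subalgebra.centralizer F (B : Set A))) :=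
  stmt3_general F A k B hB
end

section
/- Let p be an odd prime and F a subfield of ℚ(ζ_p) with [ℚ(ζ_p):F] even and [F:ℚ] odd. Then -1 is not a norm from ℚ(ζ_p) to F, i.e., there is no α ∈ ℚ(ζ_p)× with N_{ℚ(ζ_p)/F}(α) = -1. -/
/-!
`ℚ(ζ_p)` is totally complex, so complex conjugation pairs its embeddings into `ℂ` without fixed
points and every norm down to `ℚ` is a product of factors `σ α * conj (σ α) ≥ 0`. If
`N_{K/F} α = -1`, transitivity of the norm would give
`N_{K/ℚ} α = N_{F/ℚ} (-1) = (-1) ^ [F:ℚ] = -1`.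
-/

open NumberField

theorem Finset.prod_nonneg_of_involution {ι R : Type*} [DecidableEq ι] [CommSemiring R]
    [PartialOrder R] [StarRing R] [StarOrderedRing R] (f : ι → R) (g : ι → ι)
    (hg : Function.Involutive g) (hg_ne : ∀ i, g i ≠ i) (hf : ∀ i, f (g i) = star (f i))
    (s : Finset ι) (hs : ∀ i ∈ s, g i ∈ s) : 0 ≤ ∏ i ∈ s, f i := by
  induction s using Finset.strongInduction with
  | _ s ih =>
    rcases s.eq_empty_or_nonempty with rfl | ⟨a, ha⟩
    · simp
    have hga : g a ∈ s.erase a := Finset.mem_erase.2 ⟨hg_ne a, hs a ha⟩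
    set t := (s.erase a).erase (g a)
    have ht_ssubset : t ⊂ s := (Finset.erase_subset _ _).trans_ssubset (Finset.erase_ssubset ha)
    have ht_stable : ∀ i ∈ t, g i ∈ t := by
      intro i hi
      simp only [t, Finset.mem_erase] at hi ⊢
      refine ⟨fun h => hi.2.1 ?_, fun h => hi.1 ?_, hs i hi.2.2⟩
      · rw [← hg i, h, hg]
      · rw [← hg i, h]
    rw [← Finset.mul_prod_erase _ _ ha, ← Finset.mul_prod_erase _ _ hga, ← mul_assoc, hf]
    exact Left.mul_nonneg (mul_star_self_nonneg _) (ih t ht_ssubset ht_stable)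

open scoped ComplexOrder in
theorem NumberField.IsTotallyComplex.norm_nonneg {K : Type*} [Field K] [NumberField K]
    [IsTotallyComplex K] (x : K) : 0 ≤ Algebra.norm ℚ x := by
  classical
  let conj : ℂ →ₐ[ℚ] ℂ := (Complex.conjAe.restrictScalars ℚ).toAlgHom
  have h_not_fixed (σ : K →ₐ[ℚ] ℂ) : conj.comp σ ≠ σ := fun h =>
    IsTotallyComplex.complexEmbedding_not_isReal σ.toRingHom <|
      ComplexEmbedding.isReal_iff.2 <| RingHom.ext fun y => DFunLike.congr_fun h y
  have h_prod : 0 ≤ ∏ σ : K →ₐ[ℚ] ℂ, σ x :=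
    Finset.prod_nonneg_of_involution (fun σ => σ x) (conj.comp ·) (fun σ => by ext; simp [conj])
      h_not_fixed (fun _ => rfl) _ (fun _ _ => Finset.mem_univ _)
  rw [← Algebra.norm_eq_prod_embeddings ℚ ℂ x, eq_ratCast, ← Complex.ofReal_ratCast,
    Complex.zero_le_real] at h_prod
  exact_mod_cast h_prod

theorem Algebra.norm_neg_one_of_odd_finrank {K L : Type*} [Field K] [Ring L] [Algebra K L]
    (h : Odd (Module.finrank K L)) : Algebra.norm K (-1 : L) = -1 := by
  rw [← map_one (algebraMap K L), ← map_neg, Algebra.norm_algebraMap, h.neg_one_pow]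

theorem stmt6_general (p : ℕ+) (hp : (p : ℕ).Prime) (hodd : (p : ℕ) ≠ 2)
    (F : IntermediateField ℚ (CyclotomicField p ℚ))
    (hoddF : Odd (Module.finrank ℚ F)) :
    ¬ ∃ α : CyclotomicField p ℚ, α ≠ 0 ∧ Algebra.norm F α = -1 := by
  have : NeZero (p : ℕ) := ⟨p.ne_zero⟩
  have : IsCyclotomicExtension {(p : ℕ)} ℚ (CyclotomicField p ℚ) :=
    CyclotomicField.isCyclotomicExtension _ _
  have : IsTotallyComplex (CyclotomicField p ℚ) :=
    IsCyclotomicExtension.Rat.isTotallyComplex _ (lt_of_le_of_ne hp.two_le (Ne.symm hodd))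
  rintro ⟨α, -, hα⟩
  have h_nonneg := IsTotallyComplex.norm_nonneg α
  rw [← Algebra.norm_norm (S := F), hα, Algebra.norm_neg_one_of_odd_finrank hoddF] at h_nonneg
  norm_num at h_nonneg

/-- Let `p` be an odd prime and `F` a subfield of `ℚ(ζ_p)` with `[ℚ(ζ_p):F]` even and
`[F:ℚ]` odd.  Then `-1` is not a norm from `ℚ(ζ_p)` to `F`. -/
theorem stmt6 (p : ℕ+) (hp : (p : ℕ).Prime) (hodd : (p : ℕ) ≠ 2)
    (F : IntermediateField ℚ (CyclotomicField p ℚ))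
    (heven : Even (Module.finrank F (CyclotomicField p ℚ)))
    (hoddF : Odd (Module.finrank ℚ F)) :
    ¬ ∃ α : CyclotomicField p ℚ, α ≠ 0 ∧ Algebra.norm F α = -1 :=
  stmt6_general p hp hodd F hoddF
end

section
/- Let p be a prime with p ≡ 1 (mod 4) and F a subfield of ℚ(ζ_p) with [ℚ(ζ_p):F] even. Then p is a norm from ℚ(ζ_p) to F; in fact √p ∈ ℚ(ζ_p) and any even power p^{2m} lies in N_{ℚ(ζ_p)/F}(ℚ(ζ_p)×). -/
/-!
The square root of `p` is the quadratic Gauss sum, whose square is `χ(-1) p = p` because `-1` is a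
square mod `p`. For the norms, `p = N_{ℚ(ζ)/ℚ}(ζ - 1)`, and in a Galois extension `L/K` every norm
to `K` is a norm to any intermediate field `F`: writing `Gal(L/K) = Gal(L/F) · T` with `T` a set of
right coset representatives gives `N_{L/K}(x) = N_{L/F}(∏_{t ∈ T} t x)`.
-/

theorem Subgroup.IsComplement.prod_prod_mul {G M : Type*} [Group G] [CommMonoid M] [Fintype G]
    {S T : Set G} [Fintype S] [Fintype T] (h : Subgroup.IsComplement S T) (f : G → M) :
    ∏ s : S, ∏ t : T, f (s * t) = ∏ g, f g := by
  rw [← Fintype.prod_prod_type']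
  exact Fintype.prod_equiv h.equiv.symm _ _ fun _ ↦ rfl

theorem IsGalois.exists_norm_eq_algebraMap_norm {K L : Type*} [Field K] [Field L] [Algebra K L]
    [FiniteDimensional K L] [IsGalois K L] (F : IntermediateField K L) (x : L) :
    ∃ α : L, Algebra.norm F α = algebraMap K F (Algebra.norm K x) := by
  classical
  obtain ⟨T, hT, -⟩ := F.fixingSubgroup.exists_isComplement_right 1
  have : Fintype T := Fintype.ofFinite T
  refine ⟨∏ t : T, (t : L ≃ₐ[K] L) x, (algebraMap F L).injective ?_⟩
  rw [← IsScalarTower.algebraMap_apply, Algebra.norm_eq_prod_automorphisms,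
    Algebra.norm_eq_prod_automorphisms, ← hT.prod_prod_mul]
  refine Fintype.prod_equiv (IntermediateField.fixingSubgroupEquiv F).symm _ _ fun σ ↦ ?_
  simp only [map_prod, AlgEquiv.mul_apply]
  rfl

theorem IsPrimitiveRoot.exists_sq_eq_prime_of_mod_four_eq_one {R : Type*} [CommRing R]
    [IsDomain R] [CharZero R] {p : ℕ} [Fact p.Prime] {ζ : R} (hζ : IsPrimitiveRoot ζ p)
    (hp4 : p % 4 = 1) : ∃ s : R, s ^ 2 = p := by
  have hch : ringChar (ZMod p) ≠ 2 := by
    rw [ZMod.ringChar_zmod_n]; omega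
  set χ : MulChar (ZMod p) R := (quadraticChar (ZMod p)).ringHomComp (Int.castRingHom R)
  have hχ₁ : χ ≠ 1 := (MulChar.ringHomComp_ne_one_iff (Int.castRingHom R).injective_int).mpr
    (quadraticChar_ne_one hch)
  have hχ₂ : χ.IsQuadratic := (quadraticChar_isQuadratic (ZMod p)).comp _
  have hχ_neg_one : χ (-1) = 1 := by
    simp [χ, MulChar.ringHomComp_apply, quadraticChar_neg_one hch, ZMod.card,
      ZMod.χ₄_nat_one_mod_four hp4]
  refine ⟨gaussSum χ (AddChar.zmodChar p hζ.pow_eq_one), ?_⟩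
  rw [gaussSum_sq hχ₁ hχ₂ (AddChar.zmodChar_primitive_of_primitive_root p hζ), hχ_neg_one,
    one_mul, ZMod.card]

theorem stmt7_general (p : ℕ+) (hp : (p : ℕ).Prime) (hp4 : (p : ℕ) % 4 = 1)
    (F : IntermediateField ℚ (CyclotomicField p ℚ)) :
    (∃ s : CyclotomicField p ℚ, s ^ 2 = (p : CyclotomicField p ℚ)) ∧
    (∃ α : CyclotomicField p ℚ, Algebra.norm F α = ((p : ℕ) : F)) ∧
    (∀ m : ℕ, ∃ α : CyclotomicField p ℚ, Algebra.norm F α = ((p : ℕ) : F) ^ (2 * m)) := by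
  have : Fact (p : ℕ).Prime := ⟨hp⟩
  have : IsCyclotomicExtension {(p : ℕ)} ℚ (CyclotomicField p ℚ) :=
    CyclotomicField.isCyclotomicExtension _ _
  have := IsCyclotomicExtension.finiteDimensional {(p : ℕ)} ℚ (CyclotomicField p ℚ)
  have := IsCyclotomicExtension.isGalois {(p : ℕ)} ℚ (CyclotomicField p ℚ)
  obtain ⟨ζ, hζ⟩ : ∃ ζ : CyclotomicField p ℚ, IsPrimitiveRoot ζ (p : ℕ) :=
    ⟨_, IsCyclotomicExtension.zeta_spec _ ℚ _⟩
  have hnorm := hζ.norm_sub_one_of_prime_ne_two' (Polynomial.cyclotomic.irreducible_rat p.pos)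
    (by omega)
  obtain ⟨α, hα⟩ := IsGalois.exists_norm_eq_algebraMap_norm F (ζ - 1)
  rw [hnorm, map_natCast] at hα
  exact ⟨hζ.exists_sq_eq_prime_of_mod_four_eq_one hp4, ⟨α, hα⟩,
    fun m ↦ ⟨α ^ (2 * m), by rw [map_pow, hα]⟩⟩

/-- Let `p ≡ 1 (mod 4)` be a prime and `F` a subfield of `ℚ(ζ_p)` with `[ℚ(ζ_p):F]` even.
Then `√p ∈ ℚ(ζ_p)`, `p` is a norm from `ℚ(ζ_p)` to `F`, and every even power `p^(2m)`
is a norm from `ℚ(ζ_p)` to `F`. -/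
theorem stmt7 (p : ℕ+) (hp : (p : ℕ).Prime) (hp4 : (p : ℕ) % 4 = 1)
    (F : IntermediateField ℚ (CyclotomicField p ℚ))
    (heven : Even (Module.finrank F (CyclotomicField p ℚ))) :
    (∃ s : CyclotomicField p ℚ, s ^ 2 = (p : CyclotomicField p ℚ)) ∧
    (∃ α : CyclotomicField p ℚ, Algebra.norm F α = ((p : ℕ) : F)) ∧
    (∀ m : ℕ, ∃ α : CyclotomicField p ℚ, Algebra.norm F α = ((p : ℕ) : F) ^ (2 * m)) :=
  stmt7_general p hp hp4 F
end

section
/- Let p ≡ 1 (mod 4) be a prime, p - 1 = 2^{n-1} t with t odd and n ≥ 3, r a primitive root mod p, and k, q integers with r^t ≡ -kq (mod p). Let P be the extraspecial group of order p³ and exponent p with generators x,y,z as above. Then the map θ: P → P defined by x ↦ x^{r^t}, y ↦ z^k, z ↦ y^q extends to an automorphism of P of order 2^n. -/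
/-!
Model `P` by triples `⟨a, b, c⟩ ∈ (ZMod p)³` standing for `z ^ a * y ^ b * x ^ c`. The relations
give the multiplication `⟨a, b, c⟩ * ⟨a', b', c'⟩ = ⟨a + a', b + b', c + c' + b a'⟩`, and
comparing cardinalities shows that this map onto `P` is an isomorphism. In these coordinates `θ`
is `⟨a, b, c⟩ ↦ ⟨k b, q a, -kq c + kq a b⟩`, whose square is the scaling
`⟨a, b, c⟩ ↦ ⟨s a, s b, s² c⟩` by `s = kq = -r^t`. The scalings form a copy of `(ZMod p)ˣ`, in
which `-r^t` has the same order `2^(n-1)` as `r^t` because `4 ∣ 2^(n-1)`; hence `θ` has order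
`2 · 2^(n-1)`.
-/

lemma orderOf_eq_two_mul_orderOf_sq {G : Type*} [Monoid G] {g : G}
    (h : Even (orderOf (g ^ 2))) : orderOf g = 2 * orderOf (g ^ 2) := by
  rw [orderOf_pow' g two_ne_zero] at h ⊢
  rcases Nat.even_or_odd (orderOf g) with hg | hg
  · rw [Nat.gcd_eq_right (even_iff_two_dvd.mp hg), Nat.mul_div_cancel' (even_iff_two_dvd.mp hg)]
  · rw [(Nat.coprime_two_right.mpr hg).gcd_eq_one, Nat.div_one] at h
    exact absurd hg (Nat.not_odd_iff_even.mpr h)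

lemma orderOf_neg_of_even_orderOf_sq {M : Type*} [Monoid M] [HasDistribNeg M] {v : M}
    (hv : Even (orderOf (v ^ 2))) : orderOf (-v) = orderOf v := by
  rw [orderOf_eq_two_mul_orderOf_sq (neg_sq v ▸ hv), neg_sq, orderOf_eq_two_mul_orderOf_sq hv]

lemma orderOf_neg_pow_of_orderOf_eq {M : Type*} [Monoid M] [HasDistribNeg M] {r : M} {m t : ℕ}
    (hm : 2 ≤ m) (ht : t ≠ 0) (hr : orderOf r = 2 ^ m * t) : orderOf (-r ^ t) = 2 ^ m := by
  have h_pow : orderOf (r ^ t) = 2 ^ m := by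
    rw [orderOf_pow_of_dvd ht (hr ▸ dvd_mul_left t _), hr,
      Nat.mul_div_cancel _ (Nat.pos_of_ne_zero ht)]
  rw [orderOf_neg_of_even_orderOf_sq, h_pow]
  have h_half : 2 ^ m / 2 = 2 ^ (m - 1) :=
    Nat.div_eq_of_eq_mul_left two_pos (by rw [← pow_succ]; congr 1; omega)
  rw [orderOf_pow_of_dvd two_ne_zero (h_pow ▸ dvd_pow_self 2 (by omega)), h_pow, h_half]
  exact (Nat.even_pow' (by omega)).mpr even_two

@[ext]
structure Heisenberg (R : Type*) where
  a : R
  b : R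
  c : R

namespace Heisenberg

variable {R : Type*}

def equivProd : Heisenberg R ≃ R × R × R where
  toFun h := (h.a, h.b, h.c)
  invFun u := ⟨u.1, u.2.1, u.2.2⟩

instance [Finite R] : Finite (Heisenberg R) := .of_equiv _ equivProd.symm

lemma card : Nat.card (Heisenberg R) = Nat.card R ^ 3 := by
  rw [Nat.card_congr equivProd, Nat.card_prod, Nat.card_prod]
  ring

variable [CommRing R]

instance : Mul (Heisenberg R) :=
  ⟨fun h h' => ⟨h.a + h'.a, h.b + h'.b, h.c + h'.c + h.b * h'.a⟩⟩

instance : One (Heisenberg R) := ⟨⟨0, 0, 0⟩⟩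

instance : Inv (Heisenberg R) := ⟨fun h => ⟨-h.a, -h.b, -h.c + h.b * h.a⟩⟩

@[simp] lemma mul_a (h h' : Heisenberg R) : (h * h').a = h.a + h'.a := rfl
@[simp] lemma mul_b (h h' : Heisenberg R) : (h * h').b = h.b + h'.b := rfl
@[simp] lemma mul_c (h h' : Heisenberg R) : (h * h').c = h.c + h'.c + h.b * h'.a := rfl
@[simp] lemma one_a : (1 : Heisenberg R).a = 0 := rfl
@[simp] lemma one_b : (1 : Heisenberg R).b = 0 := rfl
@[simp] lemma one_c : (1 : Heisenberg R).c = 0 := rfl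
@[simp] lemma inv_a (h : Heisenberg R) : h⁻¹.a = -h.a := rfl
@[simp] lemma inv_b (h : Heisenberg R) : h⁻¹.b = -h.b := rfl
@[simp] lemma inv_c (h : Heisenberg R) : h⁻¹.c = -h.c + h.b * h.a := rfl

instance : Group (Heisenberg R) where
  mul_assoc _ _ _ := by ext <;> simp <;> ring
  one_mul _ := by ext <;> simp
  mul_one _ := by ext <;> simp
  inv_mul_cancel _ := by ext <;> simp

def scale : Rˣ →* MulAut (Heisenberg R) where
  toFun s :=
    { toFun h := ⟨s * h.a, s * h.b, s ^ 2 * h.c⟩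
      invFun h := ⟨s⁻¹ * h.a, s⁻¹ * h.b, s⁻¹ ^ 2 * h.c⟩
      left_inv h := by ext <;> simp [← mul_assoc, ← mul_pow]
      right_inv h := by ext <;> simp [← mul_assoc, ← mul_pow]
      map_mul' h h' := by ext <;> simp <;> ring }
  map_one' := by ext <;> simp
  map_mul' s s' := by ext <;> simp [MulAut.mul_apply] <;> ring

@[simp] lemma scale_apply (s : Rˣ) (h : Heisenberg R) :
    scale s h = ⟨s * h.a, s * h.b, s ^ 2 * h.c⟩ := rfl

lemma scale_injective [Nontrivial R] : Function.Injective (scale (R := R)) := by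
  intro s s' h
  have h_a := congrArg (fun φ : MulAut (Heisenberg R) => (φ ⟨1, 0, 0⟩).a) h
  exact Units.ext (by simpa using h_a)

def swapHom (K Q : R) : Heisenberg R →* Heisenberg R where
  toFun h := ⟨K * h.b, Q * h.a, -(K * Q) * h.c + K * Q * h.a * h.b⟩
  map_one' := by ext <;> simp
  map_mul' h h' := by ext <;> simp <;> ring

@[simp] lemma swapHom_apply (K Q : R) (h : Heisenberg R) :
    swapHom K Q h = ⟨K * h.b, Q * h.a, -(K * Q) * h.c + K * Q * h.a * h.b⟩ := rfl

def swap (K Q : Rˣ) : MulAut (Heisenberg R) where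
  __ := swapHom (K : R) Q
  invFun := swapHom (↑Q⁻¹ : R) ↑K⁻¹
  left_inv h := by ext <;> simp; ring_nf; simp
  right_inv h := by ext <;> simp; ring_nf; simp

@[simp] lemma swap_apply (K Q : Rˣ) (h : Heisenberg R) :
    swap K Q h = ⟨K * h.b, Q * h.a, -(K * Q) * h.c + K * Q * h.a * h.b⟩ := rfl

lemma swap_sq (K Q : Rˣ) : swap K Q ^ 2 = scale (K * Q) := by
  ext h <;> simp [sq, MulAut.mul_apply] <;> ring

lemma orderOf_swap [Nontrivial R] (K Q : Rˣ) (h : Even (orderOf (K * Q))) :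
    orderOf (swap K Q) = 2 * orderOf (K * Q) := by
  have h_sq : orderOf (swap K Q ^ 2) = orderOf (K * Q) := by
    rw [swap_sq]; exact orderOf_injective scale scale_injective _
  rw [orderOf_eq_two_mul_orderOf_sq (h_sq ▸ h), h_sq]

end Heisenberg

lemma pow_zmod_val_natCast {G : Type*} [Group G] {p : ℕ} {g : G} (hg : g ^ p = 1) (m : ℕ) :
    g ^ (m : ZMod p).val = g ^ m := by
  rw [ZMod.val_natCast, ← pow_eq_pow_mod m hg]

lemma pow_zmod_val_intCast {G : Type*} [Group G] {p : ℕ} [NeZero p] {g : G} (hg : g ^ p = 1)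
    (m : ℤ) : g ^ (m : ZMod p).val = g ^ m := by
  rw [← zpow_natCast, ZMod.val_intCast, ← zpow_eq_zpow_emod' m hg]

structure HeisenbergRelations {G : Type*} [Group G] (p : ℕ) (x y z : G) : Prop where
  pow_x : x ^ p = 1
  pow_y : y ^ p = 1
  pow_z : z ^ p = 1
  commute_xy : Commute x y
  commute_xz : Commute x z
  y_mul_z : y * z = z * y * x

namespace HeisenbergRelations

variable {G : Type*} [Group G] {p : ℕ} {x y z : G} (H : HeisenbergRelations p x y z)
include H

lemma y_mul_z_pow (a : ℕ) : y * z ^ a = z ^ a * (y * x ^ a) := by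
  induction a with
  | zero => simp
  | succ a ih =>
    calc y * z ^ (a + 1) = z ^ a * y * (x ^ a * z) := by rw [pow_succ, ← mul_assoc, ih]; group
      _ = z ^ a * (y * z) * x ^ a := by rw [(H.commute_xz.pow_left a).eq]; group
      _ = z ^ (a + 1) * (y * x ^ (a + 1)) := by rw [H.y_mul_z]; group

lemma y_pow_mul_z_pow (a b : ℕ) : y ^ b * z ^ a = z ^ a * y ^ b * x ^ (b * a) := by
  have h : SemiconjBy (z ^ a) (y * x ^ a) y := (H.y_mul_z_pow a).symm
  rw [← (h.pow_right b).eq, (H.commute_xy.pow_left a).symm.mul_pow, ← pow_mul, mul_comm a,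
    mul_assoc]

lemma normalForm_mul (A B C A' B' C' : ℕ) :
    z ^ A * y ^ B * x ^ C * (z ^ A' * y ^ B' * x ^ C') =
      z ^ (A + A') * y ^ (B + B') * x ^ (C + C' + B * A') :=
  calc z ^ A * y ^ B * x ^ C * (z ^ A' * y ^ B' * x ^ C')
      = z ^ A * y ^ B * (x ^ C * z ^ A') * y ^ B' * x ^ C' := by group
    _ = z ^ A * (y ^ B * z ^ A') * x ^ C * y ^ B' * x ^ C' := by
      rw [(H.commute_xz.pow_pow C A').eq]; group
    _ = z ^ (A + A') * y ^ B * (x ^ (C + B * A') * y ^ B') * x ^ C' := by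
      rw [H.y_pow_mul_z_pow]; group
    _ = z ^ (A + A') * y ^ (B + B') * x ^ (C + C' + B * A') := by
      rw [(H.commute_xy.pow_pow (C + B * A') B').eq]; group

variable [NeZero p]

def lift : Heisenberg (ZMod p) →* G where
  toFun h := z ^ h.a.val * y ^ h.b.val * x ^ h.c.val
  map_one' := by simp
  map_mul' h h' := by
    simp only [Heisenberg.mul_a, Heisenberg.mul_b, Heisenberg.mul_c]
    rw [H.normalForm_mul, ← pow_zmod_val_natCast H.pow_z (_ + _),
      ← pow_zmod_val_natCast H.pow_y (_ + _), ← pow_zmod_val_natCast H.pow_x (_ + _ + _)]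
    simp

lemma lift_apply (h : Heisenberg (ZMod p)) :
    H.lift h = z ^ h.a.val * y ^ h.b.val * x ^ h.c.val := rfl

lemma lift_x : H.lift ⟨0, 0, 1⟩ = x := by
  simpa [lift_apply] using pow_zmod_val_natCast H.pow_x 1

lemma lift_y : H.lift ⟨0, 1, 0⟩ = y := by
  simpa [lift_apply] using pow_zmod_val_natCast H.pow_y 1

lemma lift_z : H.lift ⟨1, 0, 0⟩ = z := by
  simpa [lift_apply] using pow_zmod_val_natCast H.pow_z 1

lemma lift_surjective (hgen : Subgroup.closure {x, y, z} = ⊤) : Function.Surjective H.lift := by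
  rw [← MonoidHom.range_eq_top, eq_top_iff, ← hgen, Subgroup.closure_le]
  rintro g (rfl | rfl | rfl)
  exacts [⟨_, H.lift_x⟩, ⟨_, H.lift_y⟩, ⟨_, H.lift_z⟩]

noncomputable def liftEquiv (hgen : Subgroup.closure {x, y, z} = ⊤) (hcard : Nat.card G = p ^ 3) :
    Heisenberg (ZMod p) ≃* G :=
  MulEquiv.ofBijective H.lift <| (Nat.bijective_iff_surjective_and_card _).mpr
    ⟨H.lift_surjective hgen, by rw [Heisenberg.card, Nat.card_zmod, hcard]⟩

lemma exists_mulAut_conj_swap (hgen : Subgroup.closure {x, y, z} = ⊤) (hcard : Nat.card G = p ^ 3)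
    (K Q : (ZMod p)ˣ) :
    ∃ θ : MulAut G, θ x = x ^ (-(K * Q : ZMod p)).val ∧ θ y = z ^ (K : ZMod p).val ∧
      θ z = y ^ (Q : ZMod p).val ∧ orderOf θ = orderOf (Heisenberg.swap K Q) := by
  set e := H.liftEquiv hgen hcard
  have hθ (h : Heisenberg (ZMod p)) :
      MulAut.congr e (Heisenberg.swap K Q) (H.lift h) = H.lift (Heisenberg.swap K Q h) := by
    change MulAut.congr e _ (e h) = e _
    simp [MulAut.congr]
  refine ⟨MulAut.congr e (Heisenberg.swap K Q), ?_, ?_, ?_, MulEquiv.orderOf_eq _ _⟩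
  · conv_lhs => rw [← H.lift_x, hθ]
    simp [lift_apply]
  · conv_lhs => rw [← H.lift_y, hθ]
    simp [lift_apply]
  · conv_lhs => rw [← H.lift_z, hθ]
    simp [lift_apply]

end HeisenbergRelations

theorem stmt9_general (p n t r : ℕ) (k q : ℤ) (hp : p.Prime)
    (hpt : p - 1 = 2 ^ (n - 1) * t) (hn : 3 ≤ n)
    (hr : orderOf (r : ZMod p) = p - 1)
    (hkq : ((r : ℤ) ^ t + k * q) % (p : ℤ) = 0)
    (P : Type*) [Group P] (x y z : P)
    (hgen : Subgroup.closure {x, y, z} = ⊤) (hcard : Nat.card P = p ^ 3)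
    (hx : x ^ p = 1) (hy : y ^ p = 1) (hz : z ^ p = 1)
    (hxy : x * y = y * x) (hyz : y * z = z * y * x) (hxz : x * z = z * x) :
    ∃ θ : MulAut P, θ x = x ^ (r ^ t) ∧ θ y = z ^ k ∧ θ z = y ^ q ∧
      orderOf θ = 2 ^ n := by
  have : Fact p.Prime := ⟨hp⟩
  have H : HeisenbergRelations p x y z := ⟨hx, hy, hz, hxy, hxz, hyz⟩
  have hKQ : (k * q : ZMod p) = -(r : ZMod p) ^ t := by
    rw [eq_neg_iff_add_eq_zero, add_comm]
    exact_mod_cast (ZMod.intCast_zmod_eq_zero_iff_dvd _ p).mpr (Int.dvd_of_emod_eq_zero hkq)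
  have hord : orderOf (-(r : ZMod p) ^ t) = 2 ^ (n - 1) :=
    orderOf_neg_pow_of_orderOf_eq (by omega) (by rintro rfl; have := hp.two_le; omega)
      (hr.trans hpt)
  have hunit : IsUnit (k * q : ZMod p) :=
    hKQ ▸ (orderOf_pos_iff.mp (hord ▸ Nat.two_pow_pos _)).isUnit
  set K := (isUnit_of_mul_isUnit_left hunit).unit
  set Q := (isUnit_of_mul_isUnit_right hunit).unit
  have hKQ_units : ((K * Q : (ZMod p)ˣ) : ZMod p) = -(r : ZMod p) ^ t := by simp [K, Q, hKQ]
  obtain ⟨θ, hθx, hθy, hθz, hθ⟩ := H.exists_mulAut_conj_swap hgen hcard K Q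
  refine ⟨θ, ?_, ?_, ?_, ?_⟩
  · rw [hθx, ← Units.val_mul, hKQ_units, neg_neg, ← Nat.cast_pow, pow_zmod_val_natCast hx]
  · rw [hθy, ← pow_zmod_val_intCast hz]
    simp [K]
  · rw [hθz, ← pow_zmod_val_intCast hy]
    simp [Q]
  · rw [hθ, Heisenberg.orderOf_swap, ← orderOf_units, hKQ_units, hord, ← pow_succ']
    · congr 1; omega
    · rw [← orderOf_units, hKQ_units, hord]
      exact (Nat.even_pow' (by omega)).mpr even_two

/-- Let `p ≡ 1 (mod 4)` be a prime with `p - 1 = 2^(n-1) t`, `t` odd, `n ≥ 3`, `r` a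
primitive root mod `p`, and `k, q` integers with `r^t ≡ -kq (mod p)`.  In the extraspecial
group `P` of order `p³` and exponent `p` with generators `x, y, z`, the assignment
`x ↦ x^(r^t)`, `y ↦ z^k`, `z ↦ y^q` extends to an automorphism `θ` of `P` of order `2^n`. -/
theorem stmt9 (p n t r : ℕ) (k q : ℤ) (hp : p.Prime) (hp4 : p % 4 = 1)
    (hpt : p - 1 = 2 ^ (n - 1) * t) (ht : Odd t) (hn : 3 ≤ n)
    (hr : orderOf (r : ZMod p) = p - 1)
    (hkq : ((r : ℤ) ^ t + k * q) % (p : ℤ) = 0)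
    (P : Type*) [Group P] [Finite P] (x y z : P)
    (hgen : Subgroup.closure {x, y, z} = ⊤) (hcard : Nat.card P = p ^ 3)
    (hx : x ^ p = 1) (hy : y ^ p = 1) (hz : z ^ p = 1)
    (hxy : x * y = y * x) (hyz : y * z = z * y * x) (hxz : x * z = z * x) :
    ∃ θ : MulAut P, θ x = x ^ (r ^ t) ∧ θ y = z ^ k ∧ θ z = y ^ q ∧
      orderOf θ = 2 ^ n :=
  stmt9_general p n t r k q hp hpt hn hr hkq P x y z hgen hcard hx hy hz hxy hyz hxz
end
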